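/- arXiv:2201.04368 — 7 statements merged into one kernel-verified Lean document; each statement's English description precedes it below -/
import Mathlib

section
/- Let n ≥ 2, x : Fin n → ℝ strictly increasing, y : Fin n → ℝ, and define f*(t) = (1/card E(t)) · Σ_{(i,j)∈E(t)} (λ_{ij}(t)·y_i + (1−λ_{ij}(t))·y_j). Then for every k with k+1 ≤ n−1 there exist real numbers a and b such that f*(t) = a·t + b for all t in the open interval (x_k, x_{k+1}); that is, the function minimizing the Mixup criterion in dimension one is piecewise linear, linear on each segment between consecutive training inputs. -/
open Finset in
/-- In the 1D Mixup setting, the Mixup-optimal function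
`f*(t) = (1/card E(t)) · Σ_{(i,j)∈E(t)} (λ_{ij}(t)·y_i + (1−λ_{ij}(t))·y_j)`,
where `E(t) = {(i,j) : i < j, x_i ≤ t ≤ x_j}` and `λ_{ij}(t) = (x_j − t)/(x_j − x_i)`,
is linear on each open segment `(x_k, x_{k+1})` between consecutive training inputs. -/
theorem mixup_minimizer_piecewise_linear
    (n : ℕ) (hn : 2 ≤ n) (x : Fin n → ℝ) (hx : StrictMono x) (y : Fin n → ℝ)
    (k : ℕ) (hk : k + 1 ≤ n - 1) :
    ∃ a b : ℝ, ∀ t ∈ Set.Ioo (x ⟨k, by omega⟩) (x ⟨k + 1, by omega⟩),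
      (letI E : Finset (Fin n × Fin n) :=
        Finset.univ.filter (fun p => p.1 < p.2 ∧ x p.1 ≤ t ∧ t ≤ x p.2)
      ((E.card : ℝ))⁻¹ *
        ∑ p ∈ E, ((x p.2 - t) / (x p.2 - x p.1) * y p.1 +
          (1 - (x p.2 - t) / (x p.2 - x p.1)) * y p.2)) = a * t + b := by
  have hkn : k < n := by omega
  have hk1n : k + 1 < n := by omega
  set F : Finset (Fin n × Fin n) :=
    Finset.univ.filter (fun p => (p.1 : ℕ) ≤ k ∧ k + 1 ≤ (p.2 : ℕ)) with hF
  set S : ℝ := ∑ p ∈ F, (y p.2 - y p.1) / (x p.2 - x p.1) with hS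
  set C : ℝ := ∑ p ∈ F, (y p.2 + x p.2 * (y p.1 - y p.2) / (x p.2 - x p.1)) with hC
  refine ⟨((F.card : ℝ))⁻¹ * S, ((F.card : ℝ))⁻¹ * C, ?_⟩
  intro t ht
  obtain ⟨ht1, ht2⟩ := ht
  have hEF : (Finset.univ.filter
      (fun p : Fin n × Fin n => p.1 < p.2 ∧ x p.1 ≤ t ∧ t ≤ x p.2)) = F := by
    ext p
    simp only [hF, Finset.mem_filter, Finset.mem_univ, true_and]
    constructor
    · rintro ⟨_, h1, h2⟩
      constructor
      · have h : x p.1 < x ⟨k + 1, hk1n⟩ := lt_of_le_of_lt h1 ht2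
        have h' : (p.1 : ℕ) < k + 1 := hx.lt_iff_lt.mp h
        omega
      · have h : x ⟨k, hkn⟩ < x p.2 := lt_of_lt_of_le ht1 h2
        have h' : k < (p.2 : ℕ) := hx.lt_iff_lt.mp h
        omega
    · rintro ⟨h1, h2⟩
      have hle1 : x p.1 ≤ x ⟨k, hkn⟩ := hx.le_iff_le.mpr h1
      have hle2 : x ⟨k + 1, hk1n⟩ ≤ x p.2 := hx.le_iff_le.mpr h2
      have hlt : (p.1 : ℕ) < (p.2 : ℕ) := by omega
      exact ⟨hlt, hle1.trans ht1.le, ht2.le.trans hle2⟩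
  simp only [hEF]
  have hsum : ∑ p ∈ F, ((x p.2 - t) / (x p.2 - x p.1) * y p.1 +
      (1 - (x p.2 - t) / (x p.2 - x p.1)) * y p.2) = S * t + C := by
    rw [hS, hC, Finset.sum_mul, ← Finset.sum_add_distrib]
    refine Finset.sum_congr rfl fun p hp => ?_
    simp only [hF, Finset.mem_filter, Finset.mem_univ, true_and] at hp
    have hp12 : p.1 < p.2 := by
      have : (p.1 : ℕ) < (p.2 : ℕ) := by omega
      exact this
    have hd : x p.2 - x p.1 ≠ 0 := sub_ne_zero.mpr (hx hp12).ne'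
    field_simp
    ring
  rw [hsum]
  ring
end

section
/- In the periodic 1D setting, for every integer K ≥ 1, the training mean of the Local Mixup minimizer equals the training mean of the outputs: (1/n)·Σ_{i ∈ ℤ/nℤ} f_K(i) = E[y]. -/
/-- The training mean `E[y] = (1/n)·Σ_{i ∈ ℤ/nℤ} y_i`. -/
noncomputable def trainMean (n : ℕ) [NeZero n] (y : ZMod n → ℝ) : ℝ :=
  (1 / (n : ℝ)) * ∑ i, y i

/-- `A_K(i) = (1/K)·Σ_{k=1}^{K−1} ((K−k)·y_{i−k} + k·y_{i+K−k})` (so `A_1(i) = 0`). -/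
noncomputable def mixA (n : ℕ) (y : ZMod n → ℝ) (i : ZMod n) (K : ℕ) : ℝ :=
  (1 / (K : ℝ)) * ∑ k ∈ Finset.Icc 1 (K - 1),
    (((K : ℝ) - (k : ℝ)) * y (i - (k : ZMod n)) + (k : ℝ) * y (i + ((K - k : ℕ) : ZMod n)))

/-- `S_1(i) = 0` and `S_{K+1}(i) = S_K(i) + A_{K+1}(i)`. -/
noncomputable def mixS (n : ℕ) (y : ZMod n → ℝ) (i : ZMod n) : ℕ → ℝ
  | 0 => 0
  | K + 1 => mixS n y i K + mixA n y i (K + 1)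

/-- The Local Mixup minimizer `f_K(i) = (2/(K·(K+3)))·(2K·y_i + S_K(i))`. -/
noncomputable def mixF (n : ℕ) (y : ZMod n → ℝ) (K : ℕ) (i : ZMod n) : ℝ :=
  (2 / ((K : ℝ) * ((K : ℝ) + 3))) * (2 * (K : ℝ) * y i + mixS n y i K)

lemma sum_shift_sub (n : ℕ) [NeZero n] (y : ZMod n → ℝ) (c : ZMod n) :
    ∑ i, y (i - c) = ∑ i, y i :=
  Fintype.sum_equiv (Equiv.subRight c) _ _ (fun _ => rfl)

lemma sum_shift_add (n : ℕ) [NeZero n] (y : ZMod n → ℝ) (c : ZMod n) :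
    ∑ i, y (i + c) = ∑ i, y i :=
  Fintype.sum_equiv (Equiv.addRight c) _ _ (fun _ => rfl)

lemma sum_mixA (n : ℕ) [NeZero n] (y : ZMod n → ℝ) (K : ℕ) (hK : 1 ≤ K) :
    ∑ i, mixA n y i K = ((K : ℝ) - 1) * ∑ i, y i := by
  have hK0 : (K : ℝ) ≠ 0 := Nat.cast_ne_zero.mpr (by omega)
  unfold mixA
  rw [← Finset.mul_sum, Finset.sum_comm]
  have : ∀ k ∈ Finset.Icc 1 (K - 1),
      (∑ i, (((K : ℝ) - (k : ℝ)) * y (i - (k : ZMod n)) + (k : ℝ) * y (i + ((K - k : ℕ) : ZMod n))))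
        = (K : ℝ) * ∑ i, y i := by
    intro k _
    rw [Finset.sum_add_distrib, ← Finset.mul_sum, ← Finset.mul_sum,
      sum_shift_sub n y, sum_shift_add n y]
    ring
  rw [Finset.sum_congr rfl this, Finset.sum_const, Nat.card_Icc]
  have h1 : ((K - 1 + 1 - 1 : ℕ) : ℝ) = (K : ℝ) - 1 := by
    rw [Nat.sub_add_cancel hK, Nat.cast_sub hK]; norm_num
  rw [nsmul_eq_mul, h1]
  field_simp

lemma sum_mixS (n : ℕ) [NeZero n] (y : ZMod n → ℝ) (K : ℕ) :
    ∑ i, mixS n y i K = ((K : ℝ) * ((K : ℝ) - 1) / 2) * ∑ i, y i := by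
  induction K with
  | zero => simp [mixS]
  | succ K ih =>
    simp only [mixS, Finset.sum_add_distrib, ih,
      sum_mixA n y (K + 1) (Nat.le_add_left 1 K)]
    push_cast
    ring

/-- In the periodic 1D setting, for every `K ≥ 1` the training mean of the
Local Mixup minimizer equals the training mean of the outputs. -/
theorem localMixup_minimizer_mean_invariant (n : ℕ) [NeZero n] (y : ZMod n → ℝ)
    (K : ℕ) (hK : 1 ≤ K) :
    (1 / (n : ℝ)) * ∑ i, mixF n y K i = trainMean n y := by
  have hK0 : (K : ℝ) ≠ 0 := Nat.cast_ne_zero.mpr (by omega)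
  unfold mixF trainMean
  rw [← Finset.mul_sum, Finset.sum_add_distrib, ← Finset.mul_sum, sum_mixS n y K]
  have h3 : (K : ℝ) + 3 ≠ 0 := by positivity
  have hn : (n : ℝ) ≠ 0 := Nat.cast_ne_zero.mpr (NeZero.ne n)
  field_simp
  ring
end

section
/- In the periodic 1D setting, for every index i there exists a constant C ≥ 0 (independent of K) such that for all integers K ≥ 1, |A_K(i) − K·E[y]| ≤ C; in other words, A_K(i) = K·E[y] + O(1) as K → ∞. -/
lemma sum_range_cast (n : ℕ) [NeZero n] (f : ZMod n → ℝ) :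
    ∑ k ∈ Finset.range n, f (k : ZMod n) = ∑ j : ZMod n, f j := by
  refine Finset.sum_nbij' (fun k => (k : ZMod n)) (fun j => j.val) ?_ ?_ ?_ ?_ ?_
  · intro k _; exact Finset.mem_univ _
  · intro j _; exact Finset.mem_range.2 (ZMod.val_lt j)
  · intro k hk; exact ZMod.val_natCast_of_lt (Finset.mem_range.1 hk)
  · intro j _; exact ZMod.natCast_zmod_val j
  · intro k _; rfl

lemma sum_Ico_period (n : ℕ) [NeZero n] (f : ZMod n → ℝ) (m : ℕ) :
    ∑ k ∈ Finset.Ico m (m + n), f (k : ZMod n) = ∑ j : ZMod n, f j := by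
  rw [Finset.sum_Ico_eq_sum_range]
  simp only [add_tsub_cancel_left, Nat.cast_add]
  rw [sum_range_cast n (fun j => f ((m : ZMod n) + j))]
  exact Fintype.sum_equiv (Equiv.addLeft (m : ZMod n)) _ _ (fun j => rfl)

lemma partialSum_bound (n : ℕ) [NeZero n] (f : ZMod n → ℝ) (m : ℕ) :
    |∑ k ∈ Finset.Icc 1 m, f (k : ZMod n) - (m : ℝ) * ((1/(n:ℝ)) * ∑ j, f j)|
      ≤ ((n:ℝ) + 1) * ∑ j, |f j| := by
  have hn0 : 0 < n := Nat.pos_of_ne_zero (NeZero.ne n)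
  have hnR : (0:ℝ) < n := by exact_mod_cast hn0
  have hM0 : (0:ℝ) ≤ ∑ j, |f j| := Finset.sum_nonneg fun j _ => abs_nonneg _
  have hT : |∑ j, f j| ≤ ∑ j, |f j| := Finset.abs_sum_le_sum_abs _ _
  induction m using Nat.strong_induction_on with
  | _ m ih =>
    by_cases h : m < n
    · have hS : |∑ k ∈ Finset.Icc 1 m, f (k : ZMod n)| ≤ (m:ℝ) * ∑ j, |f j| := by
        calc |∑ k ∈ Finset.Icc 1 m, f (k : ZMod n)|
            ≤ ∑ k ∈ Finset.Icc 1 m, |f (k : ZMod n)| := Finset.abs_sum_le_sum_abs _ _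
          _ ≤ (Finset.Icc 1 m).card • (∑ j, |f j|) := by
              refine Finset.sum_le_card_nsmul _ _ _ fun k _ => ?_
              exact Finset.single_le_sum (fun j _ => abs_nonneg (f j)) (Finset.mem_univ _)
          _ = (m:ℝ) * ∑ j, |f j| := by
              rw [Nat.card_Icc, nsmul_eq_mul]; norm_num
      have hmn : (m:ℝ) ≤ n := by exact_mod_cast h.le
      have habs : |(m : ℝ) * ((1/(n:ℝ)) * ∑ j, f j)| = (m:ℝ) * ((1/(n:ℝ)) * |∑ j, f j|) := by
        rw [abs_mul, abs_mul, Nat.abs_cast,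
          abs_of_nonneg (by positivity : (0:ℝ) ≤ 1/(n:ℝ))]
      calc |∑ k ∈ Finset.Icc 1 m, f (k : ZMod n) - (m : ℝ) * ((1/(n:ℝ)) * ∑ j, f j)|
          ≤ |∑ k ∈ Finset.Icc 1 m, f (k : ZMod n)| + |(m : ℝ) * ((1/(n:ℝ)) * ∑ j, f j)| :=
            abs_sub _ _
        _ ≤ ((n:ℝ) + 1) * ∑ j, |f j| := by
            rw [habs]
            have h1 : (m:ℝ) * ∑ j, |f j| ≤ (n:ℝ) * ∑ j, |f j| :=
              mul_le_mul_of_nonneg_right hmn hM0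
            have h2 : (m:ℝ) * ((1/(n:ℝ)) * |∑ j, f j|) ≤ ∑ j, |f j| := by
              have : (m:ℝ) * ((1/(n:ℝ)) * |∑ j, f j|) ≤ (n:ℝ) * ((1/(n:ℝ)) * ∑ j, |f j|) := by
                apply mul_le_mul hmn _ (by positivity) hnR.le
                exact mul_le_mul_of_nonneg_left hT (by positivity)
              calc (m:ℝ) * ((1/(n:ℝ)) * |∑ j, f j|) ≤ (n:ℝ) * ((1/(n:ℝ)) * ∑ j, |f j|) := this
                _ = ∑ j, |f j| := by field_simp
            linarith [hS]
    · push_neg at h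
      have hm : m - n < m := by omega
      have hsplit : ∑ k ∈ Finset.Icc 1 m, f (k : ZMod n)
          = ∑ k ∈ Finset.Icc 1 (m - n), f (k : ZMod n) + ∑ j, f j := by
        have e1 : Finset.Icc 1 m = Finset.Ico 1 (m + 1) := (Finset.Ico_add_one_right_eq_Icc 1 m).symm
        have e2 : Finset.Icc 1 (m - n) = Finset.Ico 1 (m - n + 1) :=
          (Finset.Ico_add_one_right_eq_Icc 1 (m - n)).symm
        rw [e1, e2, ← Finset.sum_Ico_consecutive (fun k => f (k : ZMod n))
          (by omega : 1 ≤ m - n + 1) (by omega : m - n + 1 ≤ m + 1)]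
        congr 1
        have e3 : m + 1 = (m - n + 1) + n := by omega
        rw [e3]
        exact sum_Ico_period n f (m - n + 1)
      have hcast : (m:ℝ) = ((m - n : ℕ):ℝ) + (n:ℝ) := by
        have : m = (m - n) + n := by omega
        exact_mod_cast congrArg (Nat.cast : ℕ → ℝ) this
      have hnμ : (n:ℝ) * ((1/(n:ℝ)) * ∑ j, f j) = ∑ j, f j := by field_simp
      have : ∑ k ∈ Finset.Icc 1 m, f (k : ZMod n) - (m : ℝ) * ((1/(n:ℝ)) * ∑ j, f j)
          = ∑ k ∈ Finset.Icc 1 (m - n), f (k : ZMod n)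
            - ((m - n : ℕ) : ℝ) * ((1/(n:ℝ)) * ∑ j, f j) := by
        rw [hsplit, hcast, add_mul, hnμ]; ring
      rw [this]
      exact ih (m - n) hm

lemma FS (g : ℕ → ℝ) (K : ℕ) :
    ∑ k ∈ Finset.Icc 1 K, (((K + 1 : ℕ):ℝ) - (k:ℝ)) * g k
      = ∑ m ∈ Finset.Icc 1 K, ∑ k ∈ Finset.Icc 1 m, g k := by
  induction K with
  | zero => simp
  | succ K ih =>
    rw [Finset.sum_Icc_succ_top (by omega : 1 ≤ K + 1),
        Finset.sum_Icc_succ_top (by omega : 1 ≤ K + 1)]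
    have h1 : ∀ k ∈ Finset.Icc 1 K,
        (((K + 1 + 1 : ℕ):ℝ) - (k:ℝ)) * g k
          = (((K + 1 : ℕ):ℝ) - (k:ℝ)) * g k + g k := by
      intro k _; push_cast; ring
    rw [Finset.sum_congr rfl h1, Finset.sum_add_distrib, ih,
        Finset.sum_Icc_succ_top (by omega : 1 ≤ K + 1)]
    push_cast
    ring

lemma gauss_Icc (t : ℕ) : 2 * ∑ m ∈ Finset.Icc 1 t, (m:ℝ) = (t:ℝ) * ((t:ℝ) + 1) := by
  induction t with
  | zero => simp
  | succ t ih =>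
    rw [Finset.sum_Icc_succ_top (by omega : 1 ≤ t + 1)]
    push_cast
    push_cast at ih
    ring_nf
    ring_nf at ih
    linarith



/-- In the periodic 1D setting, for every index `i` there is a constant `C ≥ 0`
(independent of `K`) such that for all `K ≥ 1`, `|A_K(i) − K·E[y]| ≤ C`;
i.e. `A_K(i) = K·E[y] + O(1)` as `K → ∞`. -/
theorem localMixup_A_asymptotics (n : ℕ) [NeZero n] (y : ZMod n → ℝ) (i : ZMod n) :
    ∃ C : ℝ, 0 ≤ C ∧ ∀ K : ℕ, 1 ≤ K →
      |mixA n y i K - (K : ℝ) * trainMean n y| ≤ C := by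
  classical
  set g : ZMod n → ℝ := fun j => y (i - j) + y (i + j) with hg
  set M : ℝ := ∑ j, |g j| with hMdef
  set B : ℝ := ((n:ℝ) + 1) * M with hBdef
  have hM0 : 0 ≤ M := Finset.sum_nonneg fun j _ => abs_nonneg _
  have hB0 : 0 ≤ B := by positivity
  set μ := trainMean n y with hμ
  refine ⟨|μ| + B, by positivity, ?_⟩
  intro K hK
  have hn0 : 0 < n := Nat.pos_of_ne_zero (NeZero.ne n)
  have hnR : (0:ℝ) < n := by exact_mod_cast hn0
  have hKR : (0:ℝ) < K := by exact_mod_cast hK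
  -- μg = 2 μ
  have hμg : (1/(n:ℝ)) * ∑ j, g j = 2 * μ := by
    have h1 : ∑ j : ZMod n, y (i - j) = ∑ j : ZMod n, y j :=
      Fintype.sum_equiv (Equiv.subLeft i) _ _ (fun j => rfl)
    have h2 : ∑ j : ZMod n, y (i + j) = ∑ j : ZMod n, y j :=
      Fintype.sum_equiv (Equiv.addLeft i) _ _ (fun j => rfl)
    rw [hg]
    rw [Finset.sum_add_distrib, h1, h2, hμ]
    unfold trainMean
    ring
  -- step 1: rewrite mixA
  have hstep1 : mixA n y i K
      = (1/(K:ℝ)) * ∑ k ∈ Finset.Icc 1 (K-1), ((K:ℝ) - (k:ℝ)) * g (k : ZMod n) := by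
    unfold mixA
    congr 1
    rw [Finset.sum_add_distrib]
    have hre : ∑ k ∈ Finset.Icc 1 (K-1), (k:ℝ) * y (i + ((K - k : ℕ) : ZMod n))
        = ∑ k ∈ Finset.Icc 1 (K-1), ((K:ℝ) - (k:ℝ)) * y (i + (k : ZMod n)) := by
      refine Finset.sum_nbij' (fun k => K - k) (fun k => K - k) ?_ ?_ ?_ ?_ ?_
      · intro k hk; simp only [Finset.mem_Icc] at *; omega
      · intro k hk; simp only [Finset.mem_Icc] at *; omega
      · intro k hk; simp only [Finset.mem_Icc] at hk
        show K - (K - k) = k; omega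
      · intro k hk; simp only [Finset.mem_Icc] at hk
        show K - (K - k) = k; omega
      · intro k hk
        simp only [Finset.mem_Icc] at hk
        have hkK : k ≤ K := by omega
        have h1 : ((K - k : ℕ) : ℝ) = (K:ℝ) - (k:ℝ) := Nat.cast_sub hkK
        show (k:ℝ) * y (i + ((K - k : ℕ) : ZMod n))
          = ((K:ℝ) - ((K - k : ℕ):ℝ)) * y (i + ((K - k : ℕ) : ZMod n))
        rw [h1]; ring
    rw [hre, ← Finset.sum_add_distrib]
    apply Finset.sum_congr rfl
    intro k _
    rw [hg]
    ring
  -- step 2: FS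
  set t := K - 1 with ht
  have htK : t + 1 = K := by omega
  have hstep2 : ∑ k ∈ Finset.Icc 1 t, ((K:ℝ) - (k:ℝ)) * g (k : ZMod n)
      = ∑ m ∈ Finset.Icc 1 t, ∑ k ∈ Finset.Icc 1 m, g (k : ZMod n) := by
    have := FS (fun k => g (k : ZMod n)) t
    rw [htK] at this
    exact this
  -- step 3: partial sum decomposition
  set μg : ℝ := (1/(n:ℝ)) * ∑ j, g j with hμgdef
  have hdec : ∑ m ∈ Finset.Icc 1 t, ∑ k ∈ Finset.Icc 1 m, g (k : ZMod n)
      = μg * ∑ m ∈ Finset.Icc 1 t, (m:ℝ)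
        + ∑ m ∈ Finset.Icc 1 t, (∑ k ∈ Finset.Icc 1 m, g (k : ZMod n) - (m:ℝ) * μg) := by
    rw [Finset.mul_sum, ← Finset.sum_add_distrib]
    apply Finset.sum_congr rfl
    intro m _
    ring
  set E : ℝ := ∑ m ∈ Finset.Icc 1 t, (∑ k ∈ Finset.Icc 1 m, g (k : ZMod n) - (m:ℝ) * μg)
    with hEdef
  have hE : |E| ≤ (t:ℝ) * B := by
    calc |E| ≤ ∑ m ∈ Finset.Icc 1 t, |∑ k ∈ Finset.Icc 1 m, g (k : ZMod n) - (m:ℝ) * μg| :=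
          Finset.abs_sum_le_sum_abs _ _
      _ ≤ (Finset.Icc 1 t).card • B := by
          refine Finset.sum_le_card_nsmul _ _ _ fun m _ => ?_
          exact partialSum_bound n g m
      _ = (t:ℝ) * B := by rw [Nat.card_Icc, nsmul_eq_mul]; norm_num
  -- gauss
  have hgauss : ∑ m ∈ Finset.Icc 1 t, (m:ℝ) = (t:ℝ) * ((t:ℝ) + 1) / 2 := by
    have := gauss_Icc t
    linarith
  -- assemble
  have htKR : (t:ℝ) + 1 = (K:ℝ) := by exact_mod_cast congrArg (Nat.cast : ℕ → ℝ) htK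
  have hmixA : mixA n y i K = (1/(K:ℝ)) * (μg * ((t:ℝ) * ((t:ℝ)+1) / 2) + E) := by
    rw [hstep1, hstep2, hdec, hgauss]
  have hfinal : mixA n y i K - (K:ℝ) * μ = -μ + E / (K:ℝ) := by
    rw [hmixA, hμg]
    have ht' : (t:ℝ) = (K:ℝ) - 1 := by linarith
    rw [ht']
    field_simp
    ring
  rw [hfinal]
  have h1 : |(-μ : ℝ) + E / (K:ℝ)| ≤ |μ| + |E| / (K:ℝ) := by
    calc |(-μ : ℝ) + E / (K:ℝ)| ≤ |(-μ:ℝ)| + |E / (K:ℝ)| := abs_add_le _ _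
      _ = |μ| + |E| / (K:ℝ) := by rw [abs_neg, abs_div, abs_of_pos hKR]
  have h2 : |E| / (K:ℝ) ≤ B := by
    rw [div_le_iff₀ hKR]
    calc |E| ≤ (t:ℝ) * B := hE
      _ ≤ (K:ℝ) * B := by
          apply mul_le_mul_of_nonneg_right _ hB0
          have : (t:ℝ) ≤ (K:ℝ) := by
            rw [← htKR]; linarith
          exact this
      _ = B * (K:ℝ) := by ring
  linarith
end

section
/- In the periodic 1D setting, for every index i ∈ ℤ/nℤ, the Local Mixup minimizer converges pointwise to the training mean: f_K(i) → E[y] as K → ∞. -/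
/-! Put `g(k) = y_{i-k} + y_{i+k}`. Reflecting the second half of `A_m` gives
`m·(A_m + 2·y_i) = Σ_{k<m} (m-k)·g(k)`, the term `k = 0` supplying the `2·y_i`. Over every period
`g` sums to `2n·E[y]`, so `h = g - 2·E[y]` has bounded partial sums, and
`Σ_{k<m} (m-k)·h(k)` (a sum of `m` partial sums of `h`) is `O(m)`. Hence
`A_m + 2·y_i = E[y]·(m+1) + O(1)`; summing over `m = 1, …, K`, where `Σ (m+1) = K(K+3)/2`, gives
`f_K(i) = E[y] + O(1/K)`. -/

open Finset

theorem ZMod.sum_range_natCast {M : Type*} [AddCommMonoid M] (n : ℕ) [NeZero n]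
    (φ : ZMod n → M) : ∑ k ∈ range n, φ k = ∑ x, φ x :=
  sum_nbij' (↑) ZMod.val (fun _ _ => mem_univ _) (fun x _ => mem_range.2 (ZMod.val_lt x))
    (fun _ hk => ZMod.val_cast_of_lt (mem_range.1 hk)) (fun x _ => ZMod.natCast_zmod_val x)
    (fun _ _ => rfl)

theorem ZMod.abs_sum_range_natCast_le {α : Type*} [AddCommGroup α] [LinearOrder α]
    [IsOrderedAddMonoid α] {n : ℕ} [NeZero n] {φ : ZMod n → α} (hφ : ∑ x, φ x = 0)
    (s : ℕ) : |∑ k ∈ range s, φ k| ≤ ∑ x, |φ x| := by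
  have hper : Function.Periodic (fun s => ∑ k ∈ range s, φ k) n := fun s => by
    simp only [add_comm s n, sum_range_add, ZMod.sum_range_natCast, hφ, Nat.cast_add,
      ZMod.natCast_self, zero_add]
  rw [← hper.map_mod_nat, ← ZMod.sum_range_natCast n (fun x => |φ x|)]
  exact (abs_sum_le_sum_abs _ _).trans <| sum_le_sum_of_subset_of_nonneg
    (range_subset_range.2 (Nat.mod_lt s (NeZero.pos n)).le) (fun _ _ _ => abs_nonneg _)

theorem sum_range_sub_mul_eq_sum_range_sum_range {R : Type*} [CommRing R] (g : ℕ → R) (m : ℕ) :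
    ∑ k ∈ range m, ((m : R) - k) * g k = ∑ s ∈ range m, ∑ k ∈ range (s + 1), g k := by
  induction m with
  | zero => simp
  | succ m ih =>
    rw [sum_range_succ _ m, sum_range_succ _ m, ← ih, sum_range_succ _ m]
    simp only [Nat.cast_succ, add_sub_right_comm _ (1 : R), add_mul, one_mul, sum_add_distrib]
    ring

theorem ZMod.abs_sum_range_sub_mul_le {n : ℕ} [NeZero n] {φ : ZMod n → ℝ} (hφ : ∑ x, φ x = 0)
    (m : ℕ) : |∑ k ∈ range m, ((m : ℝ) - k) * φ k| ≤ m * ∑ x, |φ x| := by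
  rw [sum_range_sub_mul_eq_sum_range_sum_range]
  calc |∑ s ∈ range m, ∑ k ∈ range (s + 1), φ k|
      ≤ ∑ s ∈ range m, |∑ k ∈ range (s + 1), φ k| := abs_sum_le_sum_abs _ _
    _ ≤ ∑ _s ∈ range m, ∑ x, |φ x| :=
      sum_le_sum fun s _ => ZMod.abs_sum_range_natCast_le hφ (s + 1)
    _ = m * ∑ x, |φ x| := by rw [sum_const, card_range, nsmul_eq_mul]

theorem sum_Icc_mul_reflect {R : Type*} [CommRing R] (f : ℕ → R) (m : ℕ) :
    ∑ k ∈ Icc 1 (m - 1), (k : R) * f (m - k) = ∑ k ∈ Icc 1 (m - 1), ((m : R) - k) * f k := by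
  refine sum_nbij' (m - ·) (m - ·) ?_ ?_ ?_ ?_ ?_ <;> intro k hk <;> simp only [mem_Icc] at hk ⊢
  all_goals first | omega | rw [Nat.cast_sub (by omega), sub_sub_cancel]

theorem mixA_add_two_mul (n : ℕ) (y : ZMod n → ℝ) (i : ZMod n) {m : ℕ} (hm : 1 ≤ m) :
    mixA n y i m + 2 * y i =
      (1 / (m : ℝ)) * ∑ k ∈ range m, ((m : ℝ) - k) * (y (i - k) + y (i + k)) := by
  have hrange : range m = insert 0 (Icc 1 (m - 1)) := by
    ext k; simp only [mem_range, mem_insert, mem_Icc]; omega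
  have hm' : (m : ℝ) ≠ 0 := by positivity
  rw [mixA, sum_add_distrib, sum_Icc_mul_reflect (fun j => y (i + j)), ← sum_add_distrib, hrange,
    sum_insert (by simp)]
  field_simp
  simp only [Nat.cast_zero, sub_zero, add_zero]
  ring

theorem sum_range_natCast_add_one (m : ℕ) : ∑ k ∈ range m, ((k : ℝ) + 1) = m * (m + 1) / 2 := by
  induction m with
  | zero => simp
  | succ m ih => rw [sum_range_succ, ih]; push_cast; ring

theorem mixS_eq_sum_range (n : ℕ) (y : ZMod n → ℝ) (i : ZMod n) (K : ℕ) :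
    mixS n y i K = ∑ m ∈ range K, mixA n y i (m + 1) := by
  induction K with
  | zero => rfl
  | succ K ih => rw [sum_range_succ, ← ih, mixS]

section Deviation

variable (n : ℕ) [NeZero n] (y : ZMod n → ℝ) (i : ZMod n)

noncomputable def symmDeviation (x : ZMod n) : ℝ := y (i - x) + y (i + x) - 2 * trainMean n y

theorem sum_symmDeviation : ∑ x, symmDeviation n y i x = 0 := by
  have hn : (n : ℝ) ≠ 0 := Nat.cast_ne_zero.2 (NeZero.ne n)
  have hsub : ∑ x, y (i - x) = ∑ x, y x := (Equiv.subLeft i).sum_comp y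
  have hadd : ∑ x, y (i + x) = ∑ x, y x := Equiv.sum_comp (Equiv.addLeft i) y
  simp only [symmDeviation, sum_sub_distrib, sum_add_distrib, hsub, hadd, sum_const, card_univ,
    ZMod.card, nsmul_eq_mul, trainMean]
  field_simp
  ring

theorem abs_mixA_add_sub_le {m : ℕ} (hm : 1 ≤ m) :
    |mixA n y i m + 2 * y i - trainMean n y * (m + 1)| ≤ ∑ x, |symmDeviation n y i x| := by
  have hweights : ∑ k ∈ range m, ((m : ℝ) - k) = m * (m + 1) / 2 := by
    calc ∑ k ∈ range m, ((m : ℝ) - k) = ∑ k ∈ range m, ((m : ℝ) - k) * 1 := by simp only [mul_one]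
      _ = ∑ s ∈ range m, ((s : ℝ) + 1) := by
        rw [sum_range_sub_mul_eq_sum_range_sum_range]; simp
      _ = m * (m + 1) / 2 := sum_range_natCast_add_one m
  have hm' : (0 : ℝ) < m := by exact_mod_cast hm
  have hdev : mixA n y i m + 2 * y i - trainMean n y * (m + 1) =
      (1 / (m : ℝ)) * ∑ k ∈ range m, ((m : ℝ) - k) * symmDeviation n y i k := by
    rw [mixA_add_two_mul n y i hm]
    simp only [symmDeviation, mul_sub, sum_sub_distrib, ← sum_mul, hweights]
    field_simp
  rw [hdev, abs_mul, abs_of_pos (by positivity), one_div, inv_mul_le_iff₀ hm']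
  exact ZMod.abs_sum_range_sub_mul_le (sum_symmDeviation n y i) m

theorem abs_mixS_add_sub_le (K : ℕ) :
    |mixS n y i K + 2 * K * y i - trainMean n y * (K * (K + 3) / 2)| ≤
      K * ∑ x, |symmDeviation n y i x| := by
  have hweights : ∑ m ∈ range K, (((m + 1 : ℕ) : ℝ) + 1) = K * (K + 3) / 2 := by
    simp only [Nat.cast_succ]
    rw [sum_add_distrib, sum_range_natCast_add_one, sum_const, card_range, nsmul_eq_mul]
    ring
  have hdev : mixS n y i K + 2 * K * y i - trainMean n y * (K * (K + 3) / 2) =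
      ∑ m ∈ range K, (mixA n y i (m + 1) + 2 * y i - trainMean n y * ((m + 1 : ℕ) + 1)) := by
    simp only [sum_sub_distrib, sum_add_distrib, ← mul_sum, hweights, mixS_eq_sum_range, sum_const,
      card_range, nsmul_eq_mul]
    ring
  rw [hdev]
  calc _ ≤ ∑ m ∈ range K, |mixA n y i (m + 1) + 2 * y i - trainMean n y * ((m + 1 : ℕ) + 1)| :=
        abs_sum_le_sum_abs _ _
    _ ≤ ∑ _m ∈ range K, ∑ x, |symmDeviation n y i x| :=
        sum_le_sum fun m _ => abs_mixA_add_sub_le n y i m.succ_pos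
    _ = K * ∑ x, |symmDeviation n y i x| := by rw [sum_const, card_range, nsmul_eq_mul]

theorem abs_mixF_sub_trainMean_le {K : ℕ} (hK : 1 ≤ K) :
    |mixF n y K i - trainMean n y| ≤ 2 * (∑ x, |symmDeviation n y i x|) / (K + 3) := by
  have hK' : (0 : ℝ) < K := by exact_mod_cast hK
  have hdev : mixF n y K i - trainMean n y = 2 / (K * (K + 3)) *
      (mixS n y i K + 2 * K * y i - trainMean n y * (K * (K + 3) / 2)) := by
    rw [mixF]
    field_simp
    ring
  rw [hdev, abs_mul, abs_of_pos (by positivity), div_mul_eq_mul_div,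
    div_le_div_iff₀ (by positivity) (by positivity)]
  nlinarith [abs_mixS_add_sub_le n y i K]

end Deviation

open Filter in
/-- In the periodic 1D setting, for every index `i ∈ ℤ/nℤ`, the Local Mixup
minimizer converges pointwise to the training mean: `f_K(i) → E[y]` as `K → ∞`. -/
theorem localMixup_minimizer_limit (n : ℕ) [NeZero n] (y : ZMod n → ℝ) (i : ZMod n) :
    Tendsto (fun K : ℕ => mixF n y K i) atTop (nhds (trainMean n y)) := by
  rw [← tendsto_sub_nhds_zero_iff]
  refine squeeze_zero_norm' (a := fun K : ℕ => 2 * (∑ x, |symmDeviation n y i x|) / (K + 3)) ?_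
    (tendsto_const_nhds.div_atTop (tendsto_atTop_add_const_right _ 3 tendsto_natCast_atTop_atTop))
  filter_upwards [eventually_ge_atTop 1] with K hK
  exact abs_mixF_sub_trainMean_le n y i hK
end

section
/- In the periodic 1D setting, the squared bias of the Local Mixup minimizer, Bias²(f_K) = (1/n)·Σ_{i ∈ ℤ/nℤ} (f_K(i) − y_i)², converges as K → ∞ to (1/n)·Σ_{i ∈ ℤ/nℤ} (y_i − E[y])². -/
/-! The minimizer is linear in `y` and reproduces constants, so `f_K(i) - E[y]` is `f_K(i)`
computed for the centred data `y - E[y]`. For centred data, summation by parts writes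
`K·A_K(i) = Σ_{k=1}^{K-1} (K-k)(y_{i-k} + y_{i+k})` as a sum of `K` partial sums of a mean-zero
`n`-periodic sequence; these are bounded, so `A_K(i) = O(1)`, `S_K(i) = O(K)` and
`f_K(i) = O(1/K)`. Hence `f_K → E[y]` pointwise and the bias converges to the variance. -/

open Finset Filter Topology

namespace ZMod

variable {n : ℕ} [NeZero n]

theorem sum_range_natCast_s7 {M : Type*} [AddCommMonoid M] (g : ZMod n → M) :
    ∑ k ∈ range n, g k = ∑ x, g x :=
  sum_nbij' (↑) ZMod.val (fun _ _ => mem_univ _) (fun x _ => mem_range.2 x.val_lt)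
    (fun _ hk => ZMod.val_natCast_of_lt (mem_range.1 hk)) (fun x _ => ZMod.natCast_zmod_val x)
    (fun _ _ => rfl)

theorem sum_range_add_natCast {M : Type*} [AddCommMonoid M] (g : ZMod n → M) (a : ℕ) :
    ∑ k ∈ range n, g ((a + k : ℕ) : ZMod n) = ∑ x, g x := by
  simp only [Nat.cast_add]
  rw [sum_range_natCast_s7 (fun x : ZMod n => g (a + x))]
  exact Equiv.sum_comp (Equiv.addLeft (a : ZMod n)) g

theorem exists_norm_sum_range_le {E : Type*} [SeminormedAddCommGroup E] {g : ZMod n → E}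
    (hg : ∑ x, g x = 0) : ∃ B, ∀ m, ‖∑ k ∈ range m, g k‖ ≤ B := by
  set P : ℕ → E := fun m => ∑ k ∈ range m, g k
  have hP : Function.Periodic P n := fun m => by
    simp only [P, sum_range_add, sum_range_add_natCast, hg, add_zero]
  refine ⟨∑ r ∈ range n, ‖P r‖, fun m => ?_⟩
  show ‖P m‖ ≤ _
  rw [← hP.map_mod_nat m]
  exact single_le_sum (f := fun r => ‖P r‖) (fun _ _ => norm_nonneg _)
    (mem_range.2 (Nat.mod_lt _ (NeZero.pos n)))

end ZMod

theorem abs_sum_Ico_sub_mul_le {g : ℕ → ℝ} {B : ℝ} (hB : ∀ m, |∑ k ∈ range m, g k| ≤ B) (K : ℕ) :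
    |∑ k ∈ Ico 1 K, ((K : ℝ) - k) * g k| ≤ 2 * B * K := by
  have habel : ∑ k ∈ Ico 1 K, ((K : ℝ) - k) * g k = ∑ j ∈ Ico 1 K, ∑ k ∈ Ico 1 (j + 1), g k := by
    rw [← sum_Ico_Ico_comm]
    refine sum_congr rfl fun k hk => ?_
    rw [sum_const, Nat.card_Ico, nsmul_eq_mul, Nat.cast_sub (mem_Ico.1 hk).2.le]
  have hpartial : ∀ j, |∑ k ∈ Ico 1 (j + 1), g k| ≤ 2 * B := fun j => by
    rw [sum_Ico_eq_sub _ (by omega)]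
    linarith [abs_sub (∑ k ∈ range (j + 1), g k) (∑ k ∈ range 1, g k), hB (j + 1), hB 1]
  have hcard : ((Ico 1 K).card : ℝ) ≤ K := by simp
  calc |∑ k ∈ Ico 1 K, ((K : ℝ) - k) * g k|
      ≤ ∑ j ∈ Ico 1 K, |∑ k ∈ Ico 1 (j + 1), g k| := habel ▸ abs_sum_le_sum_abs _ _
    _ ≤ (Ico 1 K).card • (2 * B) := sum_le_card_nsmul _ _ _ fun j _ => hpartial j
    _ ≤ 2 * B * K := by
        rw [nsmul_eq_mul, mul_comm]
        exact mul_le_mul_of_nonneg_left hcard (by linarith [abs_nonneg (∑ k ∈ range 0, g k), hB 0])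

section LocalMixup

variable {n : ℕ} (y z : ZMod n → ℝ) (i : ZMod n)

theorem mixA_sub (K : ℕ) : mixA n (y - z) i K = mixA n y i K - mixA n z i K := by
  simp only [mixA, Pi.sub_apply, ← mul_sub, ← sum_sub_distrib]
  congr 1
  exact sum_congr rfl fun _ _ => by ring

theorem mixS_sub (K : ℕ) : mixS n (y - z) i K = mixS n y i K - mixS n z i K := by
  induction K with
  | zero => simp [mixS]
  | succ K ih =>
    simp only [mixS, ih, mixA_sub]
    ring

theorem mixF_sub (K : ℕ) : mixF n (y - z) K i = mixF n y K i - mixF n z K i := by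
  simp only [mixF, mixS_sub, Pi.sub_apply]; ring

theorem mixA_const (c : ℝ) {K : ℕ} (hK : 1 ≤ K) : mixA n (fun _ => c) i K = (K - 1) * c := by
  simp only [mixA, ← add_mul, sub_add_cancel, sum_const, Nat.card_Icc, nsmul_eq_mul]
  rw [Nat.sub_add_cancel hK, Nat.cast_sub hK]
  field_simp
  ring

theorem mixS_const (c : ℝ) (K : ℕ) : mixS n (fun _ => c) i K = K * (K - 1) / 2 * c := by
  induction K with
  | zero => simp [mixS]
  | succ K ih => rw [mixS, ih, mixA_const _ _ K.succ_pos]; push_cast; ring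

theorem mixF_const (c : ℝ) {K : ℕ} (hK : 1 ≤ K) : mixF n (fun _ => c) K i = c := by
  have hK0 : (K : ℝ) ≠ 0 := by positivity
  rw [mixF, mixS_const]
  field_simp
  ring

theorem natCast_mul_mixA (K : ℕ) :
    K * mixA n y i K = ∑ k ∈ Ico 1 K, ((K : ℝ) - k) * (y (i - k) + y (i + k)) := by
  rcases K.eq_zero_or_pos with rfl | hK
  · simp
  have hIcc : Icc 1 (K - 1) = Ico 1 K := by ext; simp; omega
  have hreflect : ∑ k ∈ Ico 1 K, (k : ℝ) * y (i + ((K - k : ℕ) : ZMod n))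
      = ∑ k ∈ Ico 1 K, ((K : ℝ) - k) * y (i + k) := by
    have hrefl := sum_Ico_reflect (fun j => ((K : ℝ) - j) * y (i + j)) 1 (n := K) K.le_succ
    simp only [Nat.add_sub_cancel_left, Nat.add_sub_cancel] at hrefl
    rw [← hrefl]
    refine sum_congr rfl fun k hk => ?_
    rw [Nat.cast_sub (R := ℝ) (mem_Ico.1 hk).2.le]
    ring
  rw [mixA, ← mul_assoc, mul_one_div_cancel (by positivity), one_mul, hIcc, sum_add_distrib,
    hreflect, ← sum_add_distrib]
  exact sum_congr rfl fun _ _ => by ring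

end LocalMixup

section MeanZero

variable {n : ℕ} [NeZero n] {y : ZMod n → ℝ}

theorem exists_abs_mixA_succ_le (hy : ∑ x, y x = 0) (i : ZMod n) :
    ∃ C, ∀ K : ℕ, |mixA n y i (K + 1)| ≤ C := by
  have hsymm : ∑ x, (y (i - x) + y (i + x)) = 0 := by
    rw [sum_add_distrib, Fintype.sum_equiv (Equiv.subLeft i) (fun x => y (i - x)) y fun _ => rfl,
      Fintype.sum_equiv (Equiv.addLeft i) (fun x => y (i + x)) y fun _ => rfl, hy, add_zero]
  obtain ⟨B, hB⟩ := ZMod.exists_norm_sum_range_le hsymm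
  refine ⟨2 * B, fun K => ?_⟩
  have hK : (0 : ℝ) < (K + 1 : ℕ) := by positivity
  have hweighted := abs_sum_Ico_sub_mul_le hB (K + 1)
  rw [← natCast_mul_mixA, abs_mul, abs_of_pos hK, mul_comm (2 * B)] at hweighted
  exact le_of_mul_le_mul_left hweighted hK

theorem exists_abs_mixS_le (hy : ∑ x, y x = 0) (i : ZMod n) :
    ∃ C, ∀ K : ℕ, |mixS n y i K| ≤ C * K := by
  obtain ⟨C, hC⟩ := exists_abs_mixA_succ_le hy i
  refine ⟨C, fun K => ?_⟩
  induction K with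
  | zero => simp [mixS]
  | succ K ih =>
    rw [mixS]
    push_cast
    linarith [abs_add_le (mixS n y i K) (mixA n y i (K + 1)), hC K]

theorem tendsto_mixF_of_sum_eq_zero (hy : ∑ x, y x = 0) (i : ZMod n) :
    Tendsto (fun K => mixF n y K i) atTop (𝓝 0) := by
  obtain ⟨C, hC⟩ := exists_abs_mixS_le hy i
  refine squeeze_zero_norm' (a := fun K : ℕ => 2 * (2 * |y i| + C) / (K + 3)) ?_
    (tendsto_const_nhds.div_atTop (tendsto_atTop_add_const_right _ 3 tendsto_natCast_atTop_atTop))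
  filter_upwards [eventually_ge_atTop 1] with K hK
  have hsum : |2 * K * y i + mixS n y i K| ≤ K * (2 * |y i| + C) :=
    calc |2 * K * y i + mixS n y i K| ≤ |2 * K * y i| + |mixS n y i K| := abs_add_le _ _
      _ ≤ 2 * K * |y i| + C * K := by
        rw [abs_mul, abs_of_pos (by positivity : (0 : ℝ) < 2 * K)]
        linarith [hC K]
      _ = K * (2 * |y i| + C) := by ring
  calc ‖mixF n y K i‖ = 2 / (K * (K + 3)) * |2 * K * y i + mixS n y i K| := by
        rw [Real.norm_eq_abs, mixF, abs_mul, abs_of_pos (by positivity)]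
    _ ≤ 2 / (K * (K + 3)) * (K * (2 * |y i| + C)) := by gcongr
    _ = 2 * (2 * |y i| + C) / (K + 3) := by field_simp

end MeanZero

theorem tendsto_mixF_trainMean {n : ℕ} [NeZero n] (y : ZMod n → ℝ) (i : ZMod n) :
    Tendsto (fun K => mixF n y K i) atTop (𝓝 (trainMean n y)) := by
  set E := trainMean n y
  have hcentered : ∑ x, (y - fun _ => E : ZMod n → ℝ) x = 0 := by
    have hn : (n : ℝ) ≠ 0 := Nat.cast_ne_zero.2 (NeZero.ne n)
    simp only [Pi.sub_apply, sum_sub_distrib, sum_const, card_univ, ZMod.card, nsmul_eq_mul, E,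
      trainMean]
    field_simp
    ring
  have hlim := (tendsto_mixF_of_sum_eq_zero hcentered i).add_const E
  rw [zero_add] at hlim
  refine hlim.congr' ?_
  filter_upwards [eventually_ge_atTop 1] with K hK
  rw [mixF_sub, mixF_const _ _ hK, sub_add_cancel]

open Filter in
/-- In the periodic 1D setting, the squared bias
`Bias²(f_K) = (1/n)·Σ_i (f_K(i) − y_i)²` converges, as `K → ∞`, to
`(1/n)·Σ_i (y_i − E[y])²`. -/
theorem localMixup_bias_limit (n : ℕ) [NeZero n] (y : ZMod n → ℝ) :
    Tendsto (fun K : ℕ => (1 / (n : ℝ)) * ∑ i, (mixF n y K i - y i) ^ 2) atTop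
      (nhds ((1 / (n : ℝ)) * ∑ i, (y i - trainMean n y) ^ 2)) := by
  refine Tendsto.const_mul _ (tendsto_finsetSum _ fun i _ => ?_)
  have hlim := ((tendsto_mixF_trainMean y i).sub_const (y i)).pow 2
  rwa [← neg_sub, neg_sq] at hlim
end

section
/- In the periodic 1D setting, assume E[y] > 0. Then the training variance of the Local Mixup minimizer is eventually nonincreasing in K: there exists K₀ such that for all K ≥ K₀, Var(f_{K+1}) ≤ Var(f_K). -/
/-- Training variance `Var(f) = (1/n)·Σ_i (f(i) − (1/n)·Σ_j f(j))²`. -/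
noncomputable def trainVar (n : ℕ) [NeZero n] (f : ZMod n → ℝ) : ℝ :=
  (1 / (n : ℝ)) * ∑ i, (f i - (1 / (n : ℝ)) * ∑ j, f j) ^ 2

/-!
With `g_m v (i) = (1/m) Σ_{l,k<m} v (i - l + k)` one has `A_m = g_m - id`, hence
`f_K = 2 / (K (K + 3)) · (K y + Σ_{m ≤ K} g_m y)`. Each `g_m` is a positive semidefinite
circulant (`⟨v, g_m v⟩ = (1/m) Σ_i (Σ_{k<m} v (i + k))²`) sending constants `c` to `m c`, and on
mean-zero vectors it has norm at most `n² / m`, because window sums of a mean-zero periodic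
vector are bounded independently of the window length. After centering `y` to `u`, the
numerator `a_K = K u + Σ_{m ≤ K} g_m u` therefore satisfies `‖a_K‖ ≥ K ‖u‖`, while
`a_{K+1} - a_K = u + g_{K+1} u` has norm at most `(1 + n² / (K + 1)) ‖u‖`. Hence
`‖a_{K+1}‖ / ‖a_K‖ ≤ 1 + (1 + n² / (K + 1)) / K`, which is at most
`(K + 1) (K + 4) / (K (K + 3))` as soon as `K > n²`.
-/

open Finset

namespace LocalMixup

lemma sum_range_sub_eq_sum_Icc {M : Type*} [AddCommMonoid M] (G : ℕ → M) (m : ℕ) :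
    ∑ l ∈ range m, G (m - l) = ∑ k ∈ Icc 1 m, G k := by
  refine sum_nbij' (fun l => m - l) (fun k => m - k) ?_ ?_ ?_ ?_ ?_ <;>
    simp only [mem_range, mem_Icc]
  all_goals intros; first | trivial | omega

lemma sum_range_sum_range_sub (F : ℤ → ℝ) (m : ℕ) :
    ∑ l ∈ range m, ∑ k ∈ range m, F (k - l)
      = m * F 0 + ∑ k ∈ Icc 1 m, ((m : ℝ) - k) * (F (-k) + F k) := by
  induction m with
  | zero => simp
  | succ m ih =>
    have hrow : ∑ l ∈ range m, F (m - l) = ∑ k ∈ Icc 1 m, F k := by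
      rw [← sum_range_sub_eq_sum_Icc]
      exact sum_congr rfl fun l hl => by rw [Nat.cast_sub (mem_range.1 hl).le]
    have hcol : ∑ k ∈ range m, F (k - m) = ∑ k ∈ Icc 1 m, F (-k) := by
      rw [← sum_range_sub_eq_sum_Icc (fun k : ℕ => F (-k))]
      exact sum_congr rfl fun l hl => by rw [Nat.cast_sub (mem_range.1 hl).le, neg_sub]
    simp only [sum_range_succ, sum_add_distrib, sub_self, ih, hrow, hcol]
    rw [sum_Icc_succ_top (by omega)]
    push_cast
    simp only [add_sub_right_comm _ (1 : ℝ), add_mul, one_mul, sum_add_distrib]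
    ring

lemma sum_sq_add_le_of_sum_sq_le {ι : Type*} (s : Finset ι) (a b : ι → ℝ) {t : ℝ} (ht : 0 ≤ t)
    (hb : ∑ i ∈ s, b i ^ 2 ≤ t ^ 2 * ∑ i ∈ s, a i ^ 2) :
    ∑ i ∈ s, (a i + b i) ^ 2 ≤ (1 + t) ^ 2 * ∑ i ∈ s, a i ^ 2 := by
  have hA : 0 ≤ ∑ i ∈ s, a i ^ 2 := by positivity
  have hab : ∑ i ∈ s, a i * b i ≤ t * ∑ i ∈ s, a i ^ 2 := by
    refine le_of_sq_le_sq ?_ (by positivity)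
    calc (∑ i ∈ s, a i * b i) ^ 2 ≤ (∑ i ∈ s, a i ^ 2) * ∑ i ∈ s, b i ^ 2 :=
          sum_mul_sq_le_sq_mul_sq s a b
      _ ≤ (∑ i ∈ s, a i ^ 2) * (t ^ 2 * ∑ i ∈ s, a i ^ 2) := mul_le_mul_of_nonneg_left hb hA
      _ = (t * ∑ i ∈ s, a i ^ 2) ^ 2 := by ring
  have hexpand : ∑ i ∈ s, (a i + b i) ^ 2
      = ∑ i ∈ s, a i ^ 2 + 2 * ∑ i ∈ s, a i * b i + ∑ i ∈ s, b i ^ 2 := by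
    simp only [add_sq, sum_add_distrib, mul_sum, mul_assoc]
  rw [hexpand]
  nlinarith

variable {n : ℕ}

noncomputable def boxSum (v : ZMod n → ℝ) (m : ℕ) (i : ZMod n) : ℝ :=
  ∑ k ∈ range m, v (i + k)

noncomputable def boxSmooth (v : ZMod n → ℝ) (m : ℕ) (i : ZMod n) : ℝ :=
  (1 / (m : ℝ)) * ∑ l ∈ range m, boxSum v m (i - l)

lemma boxSmooth_eq_symm_sum (y : ZMod n → ℝ) (m : ℕ) (i : ZMod n) :
    boxSmooth y m i
      = (1 / (m : ℝ)) * (m * y i + ∑ k ∈ Icc 1 m, ((m : ℝ) - k) * (y (i - k) + y (i + k))) := by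
  have h := sum_range_sum_range_sub (fun d : ℤ => y (i + d)) m
  push_cast at h
  simp only [add_zero, ← sub_eq_add_neg] at h
  rw [boxSmooth, ← h]
  simp only [boxSum]
  congr 1
  refine sum_congr rfl fun l _ => sum_congr rfl fun k _ => ?_
  ring_nf

lemma mixA_eq_boxSmooth_sub (y : ZMod n → ℝ) (i : ZMod n) {m : ℕ} (hm : m ≠ 0) :
    mixA n y i m = boxSmooth y m i - y i := by
  obtain ⟨p, rfl⟩ : ∃ p, m = p + 1 := ⟨m - 1, by omega⟩
  have hreflect : ∑ k ∈ Icc 1 p, (k : ℝ) * y (i + ((p + 1 - k : ℕ) : ZMod n))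
      = ∑ k ∈ Icc 1 p, (((p + 1 : ℕ) : ℝ) - k) * y (i + k) := by
    refine sum_nbij' (fun k => p + 1 - k) (fun k => p + 1 - k) ?_ ?_ ?_ ?_ ?_ <;>
      simp only [mem_Icc] <;> intro k hk <;> try omega
    rw [Nat.cast_sub (R := ℝ) (by omega : k ≤ p + 1)]
    ring
  rw [boxSmooth_eq_symm_sum, sum_Icc_succ_top (by omega), mixA, Nat.add_sub_cancel, sum_add_distrib,
    hreflect, ← sum_add_distrib]
  field_simp
  push_cast
  ring

noncomputable def mixNum (v : ZMod n → ℝ) (K : ℕ) (i : ZMod n) : ℝ :=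
  K * v i + ∑ m ∈ Icc 1 K, boxSmooth v m i

lemma mixS_eq_sum_boxSmooth_sub (y : ZMod n → ℝ) (i : ZMod n) (K : ℕ) :
    mixS n y i K = ∑ m ∈ Icc 1 K, boxSmooth y m i - K * y i := by
  induction K with
  | zero => simp [mixS]
  | succ K ih =>
    rw [mixS, ih, mixA_eq_boxSmooth_sub y i K.succ_ne_zero, sum_Icc_succ_top (by omega)]
    push_cast
    ring

lemma mixF_eq_mul_mixNum (y : ZMod n → ℝ) (K : ℕ) (i : ZMod n) :
    mixF n y K i = 2 / ((K : ℝ) * (K + 3)) * mixNum y K i := by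
  rw [mixF, mixS_eq_sum_boxSmooth_sub, mixNum]
  ring

lemma mixNum_succ (v : ZMod n → ℝ) (K : ℕ) (i : ZMod n) :
    mixNum v (K + 1) i = mixNum v K i + (v i + boxSmooth v (K + 1) i) := by
  rw [mixNum, mixNum, sum_Icc_succ_top (by omega)]
  push_cast
  ring

lemma boxSmooth_add_const (v : ZMod n → ℝ) (c : ℝ) {m : ℕ} (hm : m ≠ 0) (i : ZMod n) :
    boxSmooth (fun j => v j + c) m i = boxSmooth v m i + m * c := by
  simp only [boxSmooth, boxSum, sum_add_distrib, sum_const, card_range, nsmul_eq_mul]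
  field_simp

lemma mixNum_add_const (v : ZMod n → ℝ) (c : ℝ) (K : ℕ) (i : ZMod n) :
    mixNum (fun j => v j + c) K i = mixNum v K i + (K + ∑ m ∈ Icc 1 K, (m : ℝ)) * c := by
  simp only [mixNum]
  rw [sum_congr rfl fun m hm => boxSmooth_add_const v c (by have := (mem_Icc.1 hm).1; omega) i,
    sum_add_distrib, ← sum_mul]
  ring

variable [NeZero n]

lemma sum_range_add_natCast (v : ZMod n → ℝ) (c : ZMod n) :
    ∑ k ∈ range n, v (c + k) = ∑ j, v j := by
  rw [← Fintype.sum_equiv (Equiv.addLeft c) _ _ fun _ => rfl]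
  refine sum_nbij' (fun k => (k : ZMod n)) ZMod.val ?_ ?_ ?_ ?_ ?_
  all_goals intro a ha
  · exact mem_univ _
  · exact mem_range.2 (ZMod.val_lt a)
  · exact ZMod.val_cast_of_lt (mem_range.1 ha)
  · exact ZMod.natCast_zmod_val a
  · rfl

lemma sum_boxSum (v : ZMod n → ℝ) (m : ℕ) : ∑ i, boxSum v m i = m * ∑ j, v j := by
  have hshift (k : ℕ) : ∑ i, v (i + k) = ∑ j, v j := Equiv.sum_comp (Equiv.addRight (k : ZMod n)) v
  simp only [boxSum]
  rw [sum_comm, sum_congr rfl fun k _ => hshift k, sum_const, card_range, nsmul_eq_mul]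

lemma sum_boxSmooth (v : ZMod n → ℝ) (m : ℕ) : ∑ i, boxSmooth v m i = m * ∑ j, v j := by
  have hshift (l : ℕ) : ∑ i, boxSum v m (i - l) = ∑ j, boxSum v m j :=
    Equiv.sum_comp (Equiv.subRight (l : ZMod n)) (boxSum v m)
  simp only [boxSmooth, ← mul_sum]
  rw [sum_comm, sum_congr rfl fun l _ => hshift l, sum_const, card_range, nsmul_eq_mul,
    sum_boxSum]
  rcases eq_or_ne (m : ℝ) 0 with hm | hm
  · simp [hm]
  · field_simp

lemma boxSum_add_period (v : ZMod n → ℝ) (hv : ∑ j, v j = 0) (m : ℕ) (i : ZMod n) :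
    boxSum v (m + n) i = boxSum v m i := by
  rw [boxSum, sum_range_add, ← boxSum, add_eq_left, ← hv, ← sum_range_add_natCast v (i + m)]
  simp only [Nat.cast_add, add_assoc]

lemma boxSum_mod (v : ZMod n → ℝ) (hv : ∑ j, v j = 0) (m : ℕ) (i : ZMod n) :
    boxSum v m i = boxSum v (m % n) i := by
  conv_lhs => rw [← Nat.mod_add_div m n]
  induction m / n with
  | zero => simp
  | succ q ih => rw [Nat.mul_succ, ← add_assoc, boxSum_add_period v hv, ih]

lemma abs_boxSum_le (v : ZMod n → ℝ) (hv : ∑ j, v j = 0) (m : ℕ) (i : ZMod n) :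
    |boxSum v m i| ≤ ∑ j, |v j| :=
  calc |boxSum v m i| = |boxSum v (m % n) i| := by rw [boxSum_mod v hv]
    _ ≤ ∑ k ∈ range (m % n), |v (i + k)| := abs_sum_le_sum_abs _ _
    _ ≤ ∑ k ∈ range n, |v (i + k)| :=
      sum_le_sum_of_subset_of_nonneg (range_subset_range.2 (Nat.mod_lt _ (NeZero.pos n)).le)
        fun _ _ _ => abs_nonneg _
    _ = ∑ j, |v j| := sum_range_add_natCast (fun j => |v j|) i

lemma abs_boxSmooth_le (v : ZMod n → ℝ) (hv : ∑ j, v j = 0) (m : ℕ) (i : ZMod n) :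
    |boxSmooth v m i| ≤ n / m * ∑ j, |v j| := by
  -- The outer sum of `boxSmooth` is again a window sum, of the mean-zero function `w`;
  -- bounding it as such (rather than termwise) is what yields the factor `1 / m`.
  set w : ZMod n → ℝ := fun j => boxSum v m (-j)
  have hw : ∑ j, w j = 0 := by
    rw [← mul_zero (m : ℝ), ← hv, ← sum_boxSum]
    exact Equiv.sum_comp (Equiv.neg _) (boxSum v m)
  have hreflect : ∑ l ∈ range m, boxSum v m (i - l) = boxSum w m (-i) := by
    simp only [w, boxSum, neg_add, neg_neg, sub_eq_add_neg]
  have hw_abs : ∑ j, |w j| ≤ n * ∑ j, |v j| :=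
    calc ∑ j, |w j| ≤ ∑ _j : ZMod n, ∑ j, |v j| := sum_le_sum fun j _ => abs_boxSum_le v hv m _
      _ = n * ∑ j, |v j| := by simp
  have hm : (0 : ℝ) ≤ 1 / m := by positivity
  calc |boxSmooth v m i| = 1 / m * |boxSum w m (-i)| := by
        rw [boxSmooth, hreflect, abs_mul, abs_of_nonneg hm]
    _ ≤ 1 / m * (n * ∑ j, |v j|) :=
        mul_le_mul_of_nonneg_left ((abs_boxSum_le w hw m _).trans hw_abs) hm
    _ = n / m * ∑ j, |v j| := by ring

lemma sum_sq_boxSmooth_le (v : ZMod n → ℝ) (hv : ∑ j, v j = 0) (m : ℕ) :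
    ∑ i, boxSmooth v m i ^ 2 ≤ ((n : ℝ) ^ 2 / m) ^ 2 * ∑ j, v j ^ 2 := by
  have hcs : (∑ j, |v j|) ^ 2 ≤ n * ∑ j, v j ^ 2 := by
    simpa using sq_sum_le_card_mul_sum_sq (s := univ) (f := fun j => |v j|)
  have hpt (i : ZMod n) : boxSmooth v m i ^ 2 ≤ (n / m) ^ 2 * (n * ∑ j, v j ^ 2) := by
    rw [← sq_abs]
    calc |boxSmooth v m i| ^ 2 ≤ (n / m * ∑ j, |v j|) ^ 2 :=
          pow_le_pow_left₀ (abs_nonneg _) (abs_boxSmooth_le v hv m i) 2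
      _ ≤ _ := by rw [mul_pow]; exact mul_le_mul_of_nonneg_left hcs (by positivity)
  calc ∑ i, boxSmooth v m i ^ 2 ≤ ∑ _i : ZMod n, (n / m) ^ 2 * (n * ∑ j, v j ^ 2) :=
        sum_le_sum fun i _ => hpt i
    _ = _ := by simp; ring

lemma sum_mul_boxSmooth (v : ZMod n → ℝ) (m : ℕ) :
    ∑ i, v i * boxSmooth v m i = 1 / m * ∑ i, boxSum v m i ^ 2 := by
  have hshift (l : ℕ) : ∑ i, v i * boxSum v m (i - l) = ∑ j, v (j + l) * boxSum v m j :=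
    (Equiv.sum_comp (Equiv.addRight (l : ZMod n)) (fun i => v i * boxSum v m (i - l))).symm.trans
      (by simp)
  have hexpand (i : ZMod n) :
      v i * boxSmooth v m i = 1 / m * ∑ l ∈ range m, v i * boxSum v m (i - l) := by
    rw [boxSmooth, mul_sum, mul_sum, mul_sum]
    exact sum_congr rfl fun _ _ => by ring
  rw [sum_congr rfl fun i _ => hexpand i, ← mul_sum, sum_comm, sum_congr rfl fun l _ => hshift l,
    sum_comm]
  simp only [← sum_mul, sq, boxSum]

lemma sum_mul_boxSmooth_nonneg (v : ZMod n → ℝ) (m : ℕ) : 0 ≤ ∑ i, v i * boxSmooth v m i := by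
  rw [sum_mul_boxSmooth]
  positivity

lemma trainVar_mul_add_const (a d : ℝ) (h : ZMod n → ℝ) (hh : ∑ i, h i = 0) :
    trainVar n (fun i => a * h i + d) = a ^ 2 / n * ∑ i, h i ^ 2 := by
  have hmean : 1 / (n : ℝ) * ∑ j, (a * h j + d) = d := by
    rw [sum_add_distrib, ← mul_sum, hh, mul_zero, zero_add, sum_const, card_univ, ZMod.card,
      nsmul_eq_mul]
    field_simp [NeZero.ne (n : ℝ)]
  rw [trainVar, hmean, mul_sum, mul_sum]
  exact sum_congr rfl fun i _ => by ring

lemma sum_mixNum (v : ZMod n → ℝ) (K : ℕ) :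
    ∑ i, mixNum v K i = (K + ∑ m ∈ Icc 1 K, (m : ℝ)) * ∑ j, v j := by
  simp only [mixNum, sum_add_distrib, ← mul_sum]
  rw [sum_comm (s := univ)]
  rw [sum_congr rfl fun m _ => sum_boxSmooth v m, ← sum_mul, add_mul]

lemma sq_mul_sum_sq_le_sum_sq_mixNum (v : ZMod n → ℝ) (K : ℕ) :
    (K : ℝ) ^ 2 * ∑ i, v i ^ 2 ≤ ∑ i, mixNum v K i ^ 2 := by
  set P : ZMod n → ℝ := fun i => ∑ m ∈ Icc 1 K, boxSmooth v m i
  have hP : 0 ≤ ∑ i, v i * P i := by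
    simp only [P, mul_sum]
    rw [sum_comm]
    exact sum_nonneg fun m _ => sum_mul_boxSmooth_nonneg v m
  have hexpand : ∑ i, mixNum v K i ^ 2
      = (K : ℝ) ^ 2 * ∑ i, v i ^ 2 + 2 * K * ∑ i, v i * P i + ∑ i, P i ^ 2 := by
    rw [mul_sum, mul_sum, ← sum_add_distrib, ← sum_add_distrib]
    exact sum_congr rfl fun i _ => by rw [mixNum]; ring
  have : (0 : ℝ) ≤ ∑ i, P i ^ 2 := by positivity
  rw [hexpand]
  nlinarith [sq_nonneg (K : ℝ)]

lemma sum_sub_trainMean (y : ZMod n → ℝ) : ∑ j, (y j - trainMean n y) = 0 := by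
  simp only [sum_sub_distrib, sum_const, card_univ, ZMod.card, nsmul_eq_mul, trainMean]
  field_simp [NeZero.ne (n : ℝ)]
  ring

lemma trainVar_mixF (y : ZMod n → ℝ) (K : ℕ) :
    trainVar n (mixF n y K)
      = 4 / n * ((∑ i, mixNum (fun j => y j - trainMean n y) K i ^ 2)
          / ((K : ℝ) * (K + 3)) ^ 2) := by
  set u : ZMod n → ℝ := fun j => y j - trainMean n y
  have hu : ∑ j, u j = 0 := sum_sub_trainMean y
  have hy : y = fun j => u j + trainMean n y := by
    funext j
    simp [u]
  have hf : mixF n y K = fun i => 2 / ((K : ℝ) * (K + 3)) * mixNum u K i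
      + 2 / ((K : ℝ) * (K + 3)) * ((K + ∑ m ∈ Icc 1 K, (m : ℝ)) * trainMean n y) := by
    funext i
    rw [mixF_eq_mul_mixNum, hy, mixNum_add_const, ← hy]
    ring
  rw [hf, trainVar_mul_add_const _ _ _ (by rw [sum_mixNum, hu, mul_zero]), div_pow]
  ring

lemma sum_sq_mixNum_succ_div_le (v : ZMod n → ℝ) (hv : ∑ j, v j = 0) {K : ℕ} (hK : n ^ 2 < K) :
    (∑ i, mixNum v (K + 1) i ^ 2) / (((K + 1 : ℕ) : ℝ) * ((K + 1 : ℕ) + 3)) ^ 2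
      ≤ (∑ i, mixNum v K i ^ 2) / ((K : ℝ) * (K + 3)) ^ 2 := by
  set A := ∑ i, mixNum v K i ^ 2
  have hK' : (n : ℝ) ^ 2 + 1 ≤ K := by exact_mod_cast hK
  have hKpos : (0 : ℝ) < K := by nlinarith [sq_nonneg (n : ℝ)]
  set t : ℝ := (n : ℝ) ^ 2 / (K + 1)
  obtain ⟨s, hs⟩ : ∃ s : ℝ, s * K = 1 + t := ⟨(1 + t) / K, by field_simp⟩
  have hs0 : 0 ≤ s := by nlinarith [show 0 ≤ t by positivity]
  have hstep : ∑ i, (v i + boxSmooth v (K + 1) i) ^ 2 ≤ s ^ 2 * A :=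
    calc _ ≤ (1 + t) ^ 2 * ∑ i, v i ^ 2 :=
          sum_sq_add_le_of_sum_sq_le univ v _ (t := t) (by positivity) (by
            simpa using sum_sq_boxSmooth_le v hv (K + 1))
      _ = s ^ 2 * (K ^ 2 * ∑ i, v i ^ 2) := by rw [← hs]; ring
      _ ≤ s ^ 2 * A := mul_le_mul_of_nonneg_left (sq_mul_sum_sq_le_sum_sq_mixNum v K) (sq_nonneg s)
  have hsucc : ∑ i, mixNum v (K + 1) i ^ 2 ≤ (1 + s) ^ 2 * A := by
    simp only [mixNum_succ]
    exact sum_sq_add_le_of_sum_sq_le univ _ _ hs0 hstep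
  have ht : t * (K + 3) ≤ K + 1 := by
    rw [div_mul_eq_mul_div, div_le_iff₀ (by positivity)]
    nlinarith
  have hgrowth : (1 + s) * (K * (K + 3)) ≤ (K + 1) * (K + 4) := by
    linear_combination (K + 3) * hs + ht
  have hA : 0 ≤ A := by positivity
  push_cast
  rw [show (K : ℝ) + 1 + 3 = K + 4 by ring, div_le_div_iff₀ (by positivity) (by positivity)]
  calc (∑ i, mixNum v (K + 1) i ^ 2) * (K * (K + 3)) ^ 2
      ≤ (1 + s) ^ 2 * A * (K * (K + 3)) ^ 2 := mul_le_mul_of_nonneg_right hsucc (by positivity)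
    _ = ((1 + s) * (K * (K + 3))) ^ 2 * A := by ring
    _ ≤ ((K + 1) * (K + 4)) ^ 2 * A := by gcongr
    _ = A * ((K + 1) * (K + 4)) ^ 2 := mul_comm _ _

end LocalMixup

theorem localMixup_variance_eventually_nonincreasing_general (n : ℕ) [NeZero n] (y : ZMod n → ℝ) :
    ∃ K₀ : ℕ, ∀ K : ℕ, K₀ ≤ K →
      trainVar n (mixF n y (K + 1)) ≤ trainVar n (mixF n y K) := by
  refine ⟨n ^ 2 + 1, fun K hK => ?_⟩
  rw [LocalMixup.trainVar_mixF, LocalMixup.trainVar_mixF]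
  exact mul_le_mul_of_nonneg_left
    (LocalMixup.sum_sq_mixNum_succ_div_le _ (LocalMixup.sum_sub_trainMean y) (by omega))
    (by positivity)

/-- In the periodic 1D setting, if `E[y] > 0` then the training variance of
the Local Mixup minimizer is eventually nonincreasing in `K`. -/
theorem localMixup_variance_eventually_nonincreasing (n : ℕ) [NeZero n] (y : ZMod n → ℝ)
    (hEy : 0 < trainMean n y) :
    ∃ K₀ : ℕ, ∀ K : ℕ, K₀ ≤ K →
      trainVar n (mixF n y (K + 1)) ≤ trainVar n (mixF n y K) :=
  localMixup_variance_eventually_nonincreasing_general n y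
end

section
/- Let n ≥ 1 and let (x_i, y_i) ∈ ℝ², i ∈ Fin n, be a training set. Define the Mixup objective for affine models M(a,b) = Σ_{i,j ∈ Fin n} ∫₀¹ (λ·y_i + (1−λ)·y_j − (a·(λ·x_i + (1−λ)·x_j) + b))² dλ and the vanilla least-squares objective V(a,b) = Σ_{i ∈ Fin n} (y_i − (a·x_i + b))². Then a pair (a,b) ∈ ℝ² is a global minimizer of M if and only if it is a global minimizer of V; in particular, for affine (linear) models the Mixup criterion and the vanilla criterion have the same optimal models. -/
/-- The Mixup objective for the affine model `f(x) = a·x + b`: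
`M(a,b) = Σ_{i,j} ∫₀¹ (λ·y_i + (1−λ)·y_j − (a·(λ·x_i + (1−λ)·x_j) + b))² dλ`. -/
noncomputable def mixupObjective (n : ℕ) (x y : Fin n → ℝ) (a b : ℝ) : ℝ :=
  ∑ i, ∑ j,
    ∫ l in (0 : ℝ)..1,
      (l * y i + (1 - l) * y j - (a * (l * x i + (1 - l) * x j) + b)) ^ 2

/-- The vanilla least-squares objective `V(a,b) = Σ_i (y_i − (a·x_i + b))²`. -/
noncomputable def vanillaObjective (n : ℕ) (x y : Fin n → ℝ) (a b : ℝ) : ℝ :=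
  ∑ i, (y i - (a * x i + b)) ^ 2

/-!
Write `r_i = y_i − (a x_i + b)` for the residuals and `S = Σ r_i`. The residual of a mixed
sample is the mixture `λ r_i + (1 − λ) r_j` of residuals, and integrating its square gives
`M = (2n·V + S²)/3`. Shifting the intercept by the mean residual `S/n` makes `S` vanish and
lowers `V` by `S²/n`, hence lowers `M` by `S²`. So the minimizers of both objectives have
`S = 0`, and on `{S = 0}` the objective `M` is `(2n/3)·V`.
-/

open Finset intervalIntegral

theorem integral_mix_sq (p q : ℝ) :
    ∫ l in (0 : ℝ)..1, (l * p + (1 - l) * q) ^ 2 = (p ^ 2 + p * q + q ^ 2) / 3 := by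
  have hexpand : (fun l : ℝ => (l * p + (1 - l) * q) ^ 2)
      = fun l => (p - q) ^ 2 * l ^ 2 + 2 * q * (p - q) * l + q ^ 2 := by
    funext l; ring
  rw [hexpand, integral_add, integral_add, integral_const_mul, integral_const_mul,
    integral_pow, integral_id, integral_const]
  · simp only [smul_eq_mul]; ring
  all_goals exact Continuous.intervalIntegrable (by fun_prop) _ _

theorem sum_sum_integral_mix_sq {ι : Type*} [Fintype ι] (u : ι → ℝ) :
    ∑ i, ∑ j, ∫ l in (0 : ℝ)..1, (l * u i + (1 - l) * u j) ^ 2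
      = (2 * Fintype.card ι * ∑ i, u i ^ 2 + (∑ i, u i) ^ 2) / 3 := by
  simp_rw [integral_mix_sq, ← sum_div, sum_add_distrib, ← mul_sum, ← sum_mul, sum_const,
    card_univ, nsmul_eq_mul, ← mul_sum, sq (∑ i, u i)]
  ring

theorem sum_sub_const_sq {ι : Type*} [Fintype ι] (u : ι → ℝ) (c : ℝ) :
    ∑ i, (u i - c) ^ 2 = ∑ i, u i ^ 2 - 2 * c * ∑ i, u i + Fintype.card ι * c ^ 2 := by
  simp_rw [sub_sq, sum_add_distrib, sum_sub_distrib, ← sum_mul, ← mul_sum, sum_const,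
    card_univ, nsmul_eq_mul]
  ring

noncomputable def residualSum (n : ℕ) (x y : Fin n → ℝ) (a b : ℝ) : ℝ :=
  ∑ i, (y i - (a * x i + b))

theorem mixupObjective_eq (n : ℕ) (x y : Fin n → ℝ) (a b : ℝ) :
    mixupObjective n x y a b
      = (2 * n * vanillaObjective n x y a b + residualSum n x y a b ^ 2) / 3 := by
  have h := sum_sum_integral_mix_sq fun i => y i - (a * x i + b)
  rw [Fintype.card_fin] at h
  rw [vanillaObjective, residualSum, ← h, mixupObjective]
  congr! 4 with i - j - l
  ring

theorem residualSum_add (n : ℕ) (x y : Fin n → ℝ) (a b c : ℝ) :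
    residualSum n x y a (b + c) = residualSum n x y a b - n * c := by
  simp only [residualSum, sum_sub_distrib, sum_add_distrib, sum_const, card_univ,
    Fintype.card_fin, nsmul_eq_mul]
  ring

theorem vanillaObjective_add (n : ℕ) (x y : Fin n → ℝ) (a b c : ℝ) :
    vanillaObjective n x y a (b + c)
      = vanillaObjective n x y a b - 2 * c * residualSum n x y a b + n * c ^ 2 := by
  have h := sum_sub_const_sq (fun i => y i - (a * x i + b)) c
  rw [Fintype.card_fin] at h
  rw [vanillaObjective, vanillaObjective, residualSum, ← h]
  congr! 2 with i
  ring

section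

variable {n : ℕ} {x y : Fin n → ℝ} {a b : ℝ}

theorem mixupObjective_eq_of_residualSum_eq_zero (h : residualSum n x y a b = 0) :
    mixupObjective n x y a b = 2 * n / 3 * vanillaObjective n x y a b := by
  rw [mixupObjective_eq, h]
  ring

variable (hn : 0 < n)
include hn

theorem residualSum_add_mean :
    residualSum n x y a (b + residualSum n x y a b / n) = 0 := by
  rw [residualSum_add, mul_div_cancel₀ _ (by positivity), sub_self]

theorem vanillaObjective_add_mean :
    vanillaObjective n x y a (b + residualSum n x y a b / n)
      = vanillaObjective n x y a b - residualSum n x y a b ^ 2 / n := by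
  rw [vanillaObjective_add]
  field_simp
  ring

theorem mixupObjective_add_mean :
    mixupObjective n x y a (b + residualSum n x y a b / n)
      = mixupObjective n x y a b - residualSum n x y a b ^ 2 := by
  rw [mixupObjective_eq, mixupObjective_eq, vanillaObjective_add_mean hn,
    residualSum_add_mean hn]
  field_simp
  ring

theorem residualSum_eq_zero_of_forall_vanillaObjective_le
    (h : ∀ b', vanillaObjective n x y a b ≤ vanillaObjective n x y a b') :
    residualSum n x y a b = 0 := by
  have hle := h (b + residualSum n x y a b / n)
  rw [vanillaObjective_add_mean hn, le_sub_self_iff, div_le_iff₀ (by positivity), zero_mul,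
    sq_nonpos_iff] at hle
  exact hle

theorem residualSum_eq_zero_of_forall_mixupObjective_le
    (h : ∀ b', mixupObjective n x y a b ≤ mixupObjective n x y a b') :
    residualSum n x y a b = 0 := by
  have hle := h (b + residualSum n x y a b / n)
  rwa [mixupObjective_add_mean hn, le_sub_self_iff, sq_nonpos_iff] at hle

variable (x y a b) in
theorem exists_residualSum_eq_zero_vanillaObjective_le :
    ∃ b', residualSum n x y a b' = 0 ∧
      vanillaObjective n x y a b' ≤ vanillaObjective n x y a b :=
  ⟨_, residualSum_add_mean hn, by
    rw [vanillaObjective_add_mean hn, sub_le_self_iff]; positivity⟩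

end

theorem mixup_vanilla_same_affine_minimizers_general (n : ℕ) (x y : Fin n → ℝ)
    (a b : ℝ) :
    (∀ a' b' : ℝ, mixupObjective n x y a b ≤ mixupObjective n x y a' b') ↔
      (∀ a' b' : ℝ, vanillaObjective n x y a b ≤ vanillaObjective n x y a' b') := by
  obtain rfl | hn := n.eq_zero_or_pos
  · simp [mixupObjective, vanillaObjective]
  have hn' : (0 : ℝ) < 2 * n / 3 := by positivity
  constructor
  · intro hM a' b'
    have hS := residualSum_eq_zero_of_forall_mixupObjective_le hn (hM a ·)
    obtain ⟨b'', hS'', hV''⟩ :=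
      exists_residualSum_eq_zero_vanillaObjective_le x y a' b' hn
    refine le_of_mul_le_mul_left ?_ hn'
    calc 2 * n / 3 * vanillaObjective n x y a b = mixupObjective n x y a b :=
          (mixupObjective_eq_of_residualSum_eq_zero hS).symm
      _ ≤ mixupObjective n x y a' b'' := hM a' b''
      _ = 2 * n / 3 * vanillaObjective n x y a' b'' :=
          mixupObjective_eq_of_residualSum_eq_zero hS''
      _ ≤ 2 * n / 3 * vanillaObjective n x y a' b' := by gcongr
  · intro hV a' b'
    have hS := residualSum_eq_zero_of_forall_vanillaObjective_le hn (hV a ·)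
    calc mixupObjective n x y a b = 2 * n / 3 * vanillaObjective n x y a b :=
          mixupObjective_eq_of_residualSum_eq_zero hS
      _ ≤ 2 * n / 3 * vanillaObjective n x y a' b' := by gcongr; exact hV a' b'
      _ ≤ mixupObjective n x y a' b' := by
          rw [mixupObjective_eq]; linarith [sq_nonneg (residualSum n x y a' b')]

/-- For affine models in dimension one, a pair `(a,b)` is a global minimizer
of the Mixup objective if and only if it is a global minimizer of the vanilla least-squares
objective. -/
theorem mixup_vanilla_same_affine_minimizers (n : ℕ) (hn : 1 ≤ n) (x y : Fin n → ℝ)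
    (a b : ℝ) :
    (∀ a' b' : ℝ, mixupObjective n x y a b ≤ mixupObjective n x y a' b') ↔
      (∀ a' b' : ℝ, vanillaObjective n x y a b ≤ vanillaObjective n x y a' b') :=
  mixup_vanilla_same_affine_minimizers_general n x y a b
end
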